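/- Let d \ge 2 and let \theta be a nonzero differential polynomial in one variable u that is homogeneous of degree d (with deg u_i = i) and such that in every monomial of \theta the variable u_k of highest index k \ge 1 occurring in that monomial occurs with multiplicity at least 2. Then \theta is not in the image of \partial_x; that is, there is no differential polynomial f with \partial_x f = \theta. -/

import Mathlib

open MvPolynomial

/-- Polynomials in the variables `u_1, u_2, …` (with `X i` representing `u_{i+1}`). -/
abbrev UPoly : Type := MvPolynomial ℕ ℚ

/-- The ring `ℚ[[u_0]][u_1, u_2, …]` of differential polynomials whose coefficients are
formal power series in `u_0`, realized inside `(ℚ[u_1, u_2, …])[[u_0]]`. -/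
abbrev UDiff : Type := PowerSeries UPoly

/-- The part `∑_{i ≥ 1} u_{i+1} ∂/∂u_i` of the total `x`-derivative, acting on the
polynomial coefficients. -/
noncomputable def dxU : Module.End ℚ UPoly :=
  (MvPolynomial.mkDerivation ℚ (fun i => (X (i + 1) : UPoly))).toLinearMap

/-- The partial derivative `∂/∂u_0`, i.e. the derivative of the power series in `u_0`. -/
noncomputable def d0B : Module.End ℚ UDiff where
  toFun f := PowerSeries.mk fun m => ((m : ℚ) + 1) • PowerSeries.coeff (R := UPoly) (m + 1) f
  map_add' f g := by
    ext m
    simp [PowerSeries.coeff_mk, smul_add]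
  map_smul' c f := by
    ext m
    simp only [PowerSeries.coeff_mk, PowerSeries.coeff_smul, RingHom.id_apply]
    rw [smul_comm]

/-- A `ℚ`-linear map on coefficients, applied coefficientwise to power series. -/
noncomputable def cwB (g : Module.End ℚ UPoly) : Module.End ℚ UDiff where
  toFun f := PowerSeries.mk fun m => g (PowerSeries.coeff (R := UPoly) m f)
  map_add' f h := by
    ext m
    simp [PowerSeries.coeff_mk]
  map_smul' c f := by
    ext m
    simp [PowerSeries.coeff_mk, PowerSeries.coeff_smul]

/-- The total `x`-derivative `∂_x = u_1 ∂/∂u_0 + ∑_{i ≥ 1} u_{i+1} ∂/∂u_i` on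
`ℚ[[u_0]][u_1, u_2, …]`. -/
noncomputable def dxB : Module.End ℚ UDiff where
  toFun f := PowerSeries.mk fun m =>
    dxU (PowerSeries.coeff (R := UPoly) m f) +
      ((m : ℚ) + 1) • ((X 0 : UPoly) * PowerSeries.coeff (R := UPoly) (m + 1) f)
  map_add' f g := by
    ext m
    simp [PowerSeries.coeff_mk, mul_add, smul_add]
    ring
  map_smul' c f := by
    ext m
    simp only [PowerSeries.coeff_mk, PowerSeries.coeff_smul, map_smul, RingHom.id_apply,
      smul_add]
    rw [mul_smul_comm, smul_comm]

/-- The partial derivative `∂/∂u_n` on `ℚ[[u_0]][u_1, u_2, …]`. -/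
noncomputable def pdB : ℕ → Module.End ℚ UDiff
  | 0 => d0B
  | n + 1 => cwB (pderiv n).toLinearMap

/-- The variational derivative `δf/δu = ∑_n (-∂_x)^n (∂f/∂u_n)`. -/
noncomputable def varDerB (f : UDiff) : UDiff :=
  ∑ᶠ n : ℕ, ((-1 : ℚ) ^ n) • ((dxB ^ n) (pdB n f))

/-- `f` is homogeneous of degree `d` for the grading `deg u_i = i` (so `deg u_0 = 0`):
every power-series coefficient of `f` is weighted homogeneous of degree `d`, the variable
`X i` (representing `u_{i+1}`) having weight `i + 1`. -/
def IsHomB (d : ℕ) (f : UDiff) : Prop :=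
  ∀ m : ℕ, (PowerSeries.coeff (R := UPoly) m f).IsWeightedHomogeneous (fun i => i + 1) d

/-- A monomial (exponent function on the variables `u_1, u_2, …`, in the shifted
indexing) in which the variable of highest index occurs with multiplicity at least 2. -/
def TopMultTwo (e : ℕ →₀ ℕ) : Prop :=
  ∃ k ∈ e.support, 2 ≤ e k ∧ ∀ j ∈ e.support, j ≤ k


/-! ### Auxiliary lemmas -/

lemma wts (w : ℕ → ℕ) (hw : w = fun j : ℕ => j + 1) (i : ℕ) :
    Finsupp.weight w (Finsupp.single i 1) = i + 1 := by
  subst hw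
  simp [Finsupp.weight_apply, Finsupp.sum_single_index]

lemma decompF {u : ℕ →₀ ℕ} {i : ℕ} (hi : i ∈ u.support) :
    (u - Finsupp.single i 1) + Finsupp.single i 1 = u := by
  apply tsub_add_cancel_of_le
  rw [Finsupp.single_le_iff]
  exact Nat.one_le_iff_ne_zero.mpr (Finsupp.mem_support_iff.mp hi)

lemma coeff_dxU (p : UPoly) (t : ℕ →₀ ℕ) :
    coeff t (dxU p) = ∑ u ∈ p.support, ∑ i ∈ u.support,
      (if u - Finsupp.single i 1 + Finsupp.single (i + 1) 1 = t
        then (u i : ℚ) * coeff u p else 0) := by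
  conv_lhs => rw [p.as_sum, map_sum, coeff_sum]
  refine Finset.sum_congr rfl fun u hu => ?_
  have h1 : dxU (monomial u (coeff u p)) =
      (coeff u p) • Finsupp.sum u fun i k =>
        monomial (u - Finsupp.single i 1) (k : ℚ) • (X (i + 1) : UPoly) :=
    MvPolynomial.mkDerivation_monomial (R := ℚ) (fun i => (X (i + 1) : UPoly)) u (coeff u p)
  rw [h1, Finsupp.sum, coeff_smul, coeff_sum]
  rw [Finset.smul_sum]
  refine Finset.sum_congr rfl fun i hi => ?_
  rw [smul_eq_mul (α := UPoly), ← pow_one (X (i+1) : UPoly), ← monomial_add_single]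
  rw [coeff_monomial, smul_eq_mul, mul_ite, mul_zero]
  congr 1
  ring

lemma coeff_dxU_eq_zero (p : UPoly) (t : ℕ →₀ ℕ)
    (h : ∀ u ∈ p.support, ∀ i ∈ u.support,
      u - Finsupp.single i 1 + Finsupp.single (i + 1) 1 ≠ t) :
    coeff t (dxU p) = 0 := by
  rw [coeff_dxU]
  refine Finset.sum_eq_zero fun u hu => Finset.sum_eq_zero fun i hi => ?_
  rw [if_neg (h u hu i hi)]

lemma coeff_dxU_of_unique (p : UPoly) (t e : ℕ →₀ ℕ) (N : ℕ)
    (he : e ∈ p.support) (hN : N ∈ e.support)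
    (ht : e - Finsupp.single N 1 + Finsupp.single (N + 1) 1 = t)
    (huniq : ∀ u ∈ p.support, ∀ i ∈ u.support,
      u - Finsupp.single i 1 + Finsupp.single (i + 1) 1 = t → u = e ∧ i = N) :
    coeff t (dxU p) = (e N : ℚ) * coeff e p := by
  rw [coeff_dxU]
  rw [Finset.sum_eq_single_of_mem e he (fun u hu hue =>
    Finset.sum_eq_zero fun i hi => if_neg fun hc => hue (huniq u hu i hi hc).1)]
  rw [Finset.sum_eq_single_of_mem N hN (fun i hi hiN =>
    if_neg fun hc => hiN (huniq e he i hi hc).2), if_pos ht]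

/-- A nonzero homogeneous differential polynomial of degree `d ≥ 2` (with power series
coefficients in `u_0`) in each of whose monomials the derivative variable of highest
index occurs with multiplicity at least 2 is not a total `x`-derivative. -/
theorem not_dx_exact_of_top_multiplicity_two (d : ℕ) (hd : 2 ≤ d) (θ : UDiff)
    (hne : θ ≠ 0) (hhom : IsHomB d θ)
    (hform : ∀ m : ℕ, ∀ e ∈ (PowerSeries.coeff (R := UPoly) m θ).support, TopMultTwo e) :
    ¬ ∃ f : UDiff, dxB f = θ := by
  classical
  rintro ⟨f, hf⟩
  set w : ℕ → ℕ := fun i => i + 1 with hw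
  have hθc : ∀ m, PowerSeries.coeff (R := UPoly) m θ =
      dxU (PowerSeries.coeff (R := UPoly) m f) +
        ((m : ℚ) + 1) • ((X 0 : UPoly) * PowerSeries.coeff (R := UPoly) (m + 1) f) := by
    intro m
    have h1 : dxB f = PowerSeries.mk fun k => dxU (PowerSeries.coeff (R := UPoly) k f) +
        ((k : ℚ) + 1) • ((X 0 : UPoly) * PowerSeries.coeff (R := UPoly) (k + 1) f) := rfl
    rw [← hf, h1, PowerSeries.coeff_mk]
  set Q : ℕ → Prop := fun N => ∀ m : ℕ, ∀ u ∈ (PowerSeries.coeff (R := UPoly) m f).support,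
      Finsupp.weight w u + 1 = d → ∀ j, N ≤ j → u j = 0 with hQ
  have base : Q (d - 1) := by
    intro m u hu hwu j hj
    by_contra h0
    have h1 : w j ≤ Finsupp.weight w u := Finsupp.le_weight_of_ne_zero' w h0
    have h2 : w j = j + 1 := rfl
    omega
  have step : ∀ N, Q (N + 1) → Q N := by
    intro N ih m u hu hwu j hj
    by_cases hjN : N + 1 ≤ j
    · exact ih m u hu hwu j hjN
    have hj' : j = N := by omega
    subst hj'
    by_contra h0
    have hNs : j ∈ u.support := Finsupp.mem_support_iff.mpr h0
    set u₀ : ℕ →₀ ℕ := u - Finsupp.single j 1 with hu₀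
    have hdec : u₀ + Finsupp.single j 1 = u := decompF hNs
    set t : ℕ →₀ ℕ := u₀ + Finsupp.single (j + 1) 1 with hT
    have hwu₀ : Finsupp.weight w u₀ + (j + 1) = Finsupp.weight w u := by
      rw [← hdec, map_add, wts w hw]
    have hwt : Finsupp.weight w t = Finsupp.weight w u₀ + (j + 1 + 1) := by
      rw [hT, map_add, wts w hw]
    have hu_top : ∀ k, j + 1 ≤ k → u k = 0 := fun k hk => ih m u hu hwu k hk
    have hu₀_top : ∀ k, j + 1 ≤ k → u₀ k = 0 := by
      intro k hk
      rw [hu₀, Finsupp.tsub_apply, hu_top k hk]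
      simp
    have ht1 : t (j + 1) = 1 := by
      rw [hT, Finsupp.add_apply, Finsupp.single_apply, hu₀_top (j+1) le_rfl, if_pos rfl]
    have huniq : ∀ u' ∈ (PowerSeries.coeff (R := UPoly) m f).support, ∀ i ∈ u'.support,
        u' - Finsupp.single i 1 + Finsupp.single (i + 1) 1 = t → u' = u ∧ i = j := by
      intro u' hu' i hi heq
      have hdec' : (u' - Finsupp.single i 1) + Finsupp.single i 1 = u' := decompF hi
      set u₀' : ℕ →₀ ℕ := u' - Finsupp.single i 1 with hu₀'
      have hw1 : Finsupp.weight w u₀' + (i + 1 + 1) = Finsupp.weight w t := by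
        rw [← heq, map_add, wts w hw]
      have hw2 : Finsupp.weight w u₀' + (i + 1) = Finsupp.weight w u' := by
        rw [← hdec', map_add, wts w hw]
      have hwu' : Finsupp.weight w u' + 1 = d := by omega
      have hu'_top : ∀ k, j + 1 ≤ k → u' k = 0 := fun k hk => ih m u' hu' hwu' k hk
      have hu₀'_top : u₀' (j + 1) = 0 := by
        rw [hu₀', Finsupp.tsub_apply, hu'_top (j+1) le_rfl]
        simp
      have hev : u₀' (j+1) + Finsupp.single (i+1) 1 (j+1) = t (j+1) := by
        rw [← heq]; rfl
      rw [ht1, hu₀'_top, Finsupp.single_apply] at hev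
      have hij : i = j := by
        by_cases hc : i + 1 = j + 1
        · omega
        · rw [if_neg hc] at hev; omega
      subst hij
      have hequ : u₀' = u₀ := by
        have := heq
        rw [hT] at this
        exact add_right_cancel this
      refine ⟨?_, rfl⟩
      rw [← hdec', hequ, hdec]
    have hcX : coeff t ((X 0 : UPoly) * PowerSeries.coeff (R := UPoly) (m + 1) f) = 0 := by
      rw [coeff_X_mul']
      split_ifs with h0s
      · by_contra hv0
        have hvs : (t - Finsupp.single 0 1) ∈ (PowerSeries.coeff (R := UPoly) (m+1) f).support :=
          MvPolynomial.mem_support_iff.mpr hv0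
        have hdec2 : (t - Finsupp.single 0 1) + Finsupp.single 0 1 = t := decompF h0s
        have hwv : Finsupp.weight w (t - Finsupp.single 0 1) + (0 + 1) = Finsupp.weight w t := by
          conv_rhs => rw [← hdec2]
          rw [map_add, wts w hw]
        have hvN : ((t - Finsupp.single 0 1 : ℕ →₀ ℕ)) (j + 1) = 0 :=
          ih (m+1) _ hvs (by omega) (j+1) le_rfl
        rw [Finsupp.tsub_apply, ht1, Finsupp.single_apply] at hvN
        simp at hvN
      · rfl
    have hcD : coeff t (dxU (PowerSeries.coeff (R := UPoly) m f)) =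
        (u j : ℚ) * coeff u (PowerSeries.coeff (R := UPoly) m f) := by
      refine coeff_dxU_of_unique _ t u j hu hNs ?_ huniq
      rw [← hu₀, hT]
    have hmem : t ∈ (PowerSeries.coeff (R := UPoly) m θ).support := by
      rw [MvPolynomial.mem_support_iff, hθc m, coeff_add, coeff_smul, hcD, hcX, smul_zero,
        add_zero]
      exact mul_ne_zero (Nat.cast_ne_zero.mpr h0) (MvPolynomial.mem_support_iff.mp hu)
    obtain ⟨k, hks, hk2, hktop⟩ := hform m t hmem
    have hN1s : j + 1 ∈ t.support := by
      rw [Finsupp.mem_support_iff, ht1]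
      omega
    have hkN : j + 1 ≤ k := hktop _ hN1s
    have htk : t k = u₀ k + (if j + 1 = k then 1 else 0) := by
      rw [hT, Finsupp.add_apply, Finsupp.single_apply]
    have hks' : t k ≠ 0 := Finsupp.mem_support_iff.mp hks
    by_cases hkj : k = j + 1
    · subst hkj; omega
    · have : u₀ k = 0 := hu₀_top k (by omega)
      rw [this, if_neg (by omega)] at htk
      omega
  have hQall : ∀ k, Q (d - 1 - k) := by
    intro k
    induction k with
    | zero => exact base
    | succ k ihk =>
      rcases (by omega : d - 1 - k = d - 1 - (k+1) ∨ d - 1 - k = (d - 1 - (k+1)) + 1) with h | h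
      · exact h ▸ ihk
      · exact step _ (h ▸ ihk)
    
  have hQ0 : Q 0 := by
    have := hQall (d - 1)
    rwa [Nat.sub_self] at this
  have Hstar : ∀ m : ℕ, ∀ u ∈ (PowerSeries.coeff (R := UPoly) m f).support,
      Finsupp.weight w u + 1 ≠ d := by
    intro m u hu hwu
    have hu0 : u = 0 := Finsupp.ext fun j => hQ0 m u hu hwu j (Nat.zero_le j)
    rw [hu0, map_zero] at hwu
    omega
  apply hne
  refine PowerSeries.ext fun m => ?_
  rw [map_zero]
  refine MvPolynomial.eq_zero_iff.mpr fun t => ?_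
  by_contra hc
  have hmem : t ∈ (PowerSeries.coeff (R := UPoly) m θ).support := MvPolynomial.mem_support_iff.mpr hc
  have hwt : Finsupp.weight w t = d := hhom m hc
  have hcD : coeff t (dxU (PowerSeries.coeff (R := UPoly) m f)) = 0 := by
    refine coeff_dxU_eq_zero _ _ fun u hu i hi heq => ?_
    have hdec' : (u - Finsupp.single i 1) + Finsupp.single i 1 = u := decompF hi
    have hw1 : Finsupp.weight w (u - Finsupp.single i 1) + (i + 1 + 1) = Finsupp.weight w t := by
      rw [← heq, map_add, wts w hw]
    have hw2 : Finsupp.weight w (u - Finsupp.single i 1) + (i + 1) = Finsupp.weight w u := by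
      conv_rhs => rw [← hdec']
      rw [map_add, wts w hw]
    exact Hstar m u hu (by omega)
  have hcX : coeff t ((X 0 : UPoly) * PowerSeries.coeff (R := UPoly) (m + 1) f) = 0 := by
    rw [coeff_X_mul']
    split_ifs with h0s
    · by_contra hv0
      have hvs : (t - Finsupp.single 0 1) ∈ (PowerSeries.coeff (R := UPoly) (m+1) f).support :=
        MvPolynomial.mem_support_iff.mpr hv0
      have hdec2 : (t - Finsupp.single 0 1) + Finsupp.single 0 1 = t := decompF h0s
      have hwv : Finsupp.weight w (t - Finsupp.single 0 1) + (0 + 1) = Finsupp.weight w t := by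
        conv_rhs => rw [← hdec2]
        rw [map_add, wts w hw]
      exact Hstar (m+1) _ hvs (by omega)
    · rfl
  rw [hθc m, coeff_add, coeff_smul, hcD, hcX, smul_zero, add_zero] at hc
  exact hc rfl
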